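/- Suppose C ⊆ Pr(𝕋) is minimal with respect to the properties of being nonempty, weak*-compact, convex, and ˆ-closed, ⪯ is a linear quasi-order on 𝕋 such that s ≺ sˆt and t ≺ sˆt for all s,t ∈ 𝕋, and let I = {s ∈ 𝕋 : for every μ ∈ C, μ({t ∈ 𝕋 : s ≺ t}) = 1}. If μ(I) = 1 for every μ ∈ C, then for every μ ∈ C, every s ∈ I, and every finite binary sequence σ, μ({t ∈ 𝕋 : t/σ is defined, t/σ ∈ I, and s ≺ t/σ}) = 1. -/

import Mathlib

open scoped Classical

/-- The free binary system (free magma) on one generator. -/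
abbrev 𝕋 : Type := FreeMagma Unit

/-- The generator `1` of `𝕋`. -/
def e1 : 𝕋 := FreeMagma.of ()

/-- `#(t)`: the number of occurrences of the generator in `t`. -/
def cnt : 𝕋 → ℕ
  | FreeMagma.of _ => 1
  | FreeMagma.mul a b => cnt a + cnt b

/-- The space `ℓ^∞(S)` of bounded real-valued functions on `S`. -/
def Bdd (S : Type*) : Type _ := {f : S → ℝ // ∃ M, ∀ s, |f s| ≤ M}

/-- Package a function as an element of `Bdd S` (junk value if unbounded). -/
noncomputable def liftBdd {S : Type*} (g : S → ℝ) : Bdd S :=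
  if h : ∃ M, ∀ s, |g s| ≤ M then ⟨g, h⟩ else ⟨fun _ => 0, 0, fun _ => by simp⟩

/-- The constant function as an element of `Bdd S`. -/
def constB (S : Type*) (c : ℝ) : Bdd S := ⟨fun _ => c, |c|, fun _ => le_rfl⟩

/-- The characteristic function of `E` as an element of `Bdd S`. -/
noncomputable def indB {S : Type*} (E : Set S) : Bdd S :=
  liftBdd (fun s => if s ∈ E then 1 else 0)

/-- `Pr S`: finitely additive probability measures on `S`, identified with the
positive normalized linear functionals on `ℓ^∞(S)`.  The weak* topology is the
subspace topology inherited from the product topology on `Bdd S → ℝ`. -/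
def PrSet (S : Type*) : Set (Bdd S → ℝ) :=
  {φ | (∀ f g h : Bdd S, (∀ s, h.1 s = f.1 s + g.1 s) → φ h = φ f + φ g) ∧
       (∀ (c : ℝ) (f g : Bdd S), (∀ s, g.1 s = c * f.1 s) → φ g = c * φ f) ∧
       (∀ f : Bdd S, (∀ s, 0 ≤ f.1 s) → 0 ≤ φ f) ∧
       φ (constB S 1) = 1}

/-- `μ(E)`: the measure of a set `E ⊆ S`. -/
noncomputable def mE {S : Type*} (φ : Bdd S → ℝ) (E : Set S) : ℝ := φ (indB E)

/-- The product `μ ⊗ ν` of finitely additive measures: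
`μ⊗ν(f) = μ(x ↦ ν(y ↦ f(x,y)))`. -/
noncomputable def prodM {S T : Type*} (φ : Bdd S → ℝ) (ψ : Bdd T → ℝ) :
    Bdd (S × T) → ℝ :=
  fun f => φ (liftBdd fun x => ψ (liftBdd fun y => f.1 (x, y)))

/-- The extension of a binary operation `op` on `S` to `Pr S`:
`μ⋆ν(f) = μ(x ↦ ν(y ↦ f(x ⋆ y)))`. -/
noncomputable def starM {S : Type*} (op : S → S → S) (φ ψ : Bdd S → ℝ) :
    Bdd S → ℝ :=
  fun f => φ (liftBdd fun x => ψ (liftBdd fun y => f.1 (op x y)))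

/-- The extension of `ˆ` to `Pr 𝕋`. -/
noncomputable def hmul (φ ψ : Bdd 𝕋 → ℝ) : Bdd 𝕋 → ℝ := starM (· * ·) φ ψ

/-- Finitely supported probability measures: finite convex combinations of
point evaluations. -/
def FinSuppPr (S : Type*) : Set (Bdd S → ℝ) :=
  {φ | ∃ (F : Finset S) (w : S → ℝ), (∀ s ∈ F, 0 ≤ w s) ∧ (∑ s ∈ F, w s) = 1 ∧
      ∀ f : Bdd S, φ f = ∑ s ∈ F, w s * f.1 s}

/-- `𝔸_n`: finitely supported probability measures concentrated on `𝕋_n`. -/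
def Asets (n : ℕ) : Set (Bdd 𝕋 → ℝ) :=
  {φ | ∃ (F : Finset 𝕋) (w : 𝕋 → ℝ), (∀ t ∈ F, cnt t = n) ∧ (∀ t ∈ F, 0 ≤ w t) ∧
      (∑ t ∈ F, w t) = 1 ∧ ∀ f : Bdd 𝕋, φ f = ∑ t ∈ F, w t * f.1 t}

/-- The extension of `+` on `ℕ` to ultrafilters: `A ∈ U+V` iff
`{m : {n : m+n ∈ A} ∈ V} ∈ U`. -/
noncomputable def addU (U V : Ultrafilter ℕ) : Ultrafilter ℕ :=
  U.bind fun m => V.map fun n => m + n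

/-- `𝔸_U`: the `U`-limit of the sets `𝔸_m`. -/
def AU (U : Ultrafilter ℕ) : Set (Bdd 𝕋 → ℝ) :=
  {μ | μ ∈ PrSet 𝕋 ∧ ∀ W : Set (Bdd 𝕋 → ℝ), IsOpen W → μ ∈ W →
      {m : ℕ | (W ∩ Asets m).Nonempty} ∈ U}

/-- The extension of `ˆ` to ultrafilters on `𝕋`: `E ∈ UˆV` iff
`{u : {v : uˆv ∈ E} ∈ V} ∈ U`. -/
noncomputable def umul (U V : Ultrafilter 𝕋) : Ultrafilter 𝕋 :=
  U.bind fun u => V.map fun v => u * v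

/-- Substitution of measures into a term `t`:
`t(μ_0,…,μ_{m-1})(f)` is the nested integral
`μ_0(x_0 ↦ ⋯ μ_{m-1}(x_{m-1} ↦ f(t(x⃗)))⋯)`. -/
noncomputable def substM : 𝕋 → List (Bdd 𝕋 → ℝ) → (Bdd 𝕋 → ℝ)
  | FreeMagma.of _, μs => μs.headI
  | FreeMagma.mul a b, μs =>
      hmul (substM a (μs.take (cnt a))) (substM b (μs.drop (cnt a)))

/-- `t_k`: iteratively remove the carets of `t` involving only leaves of index
greater than `k`. -/
def tk : 𝕋 → ℕ → 𝕋
  | FreeMagma.of _, _ => e1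
  | FreeMagma.mul a b, k => if k < cnt a then tk a k * e1 else a * tk b (k - cnt a)

/-- `l_k(t) = #(t_k) - 2` (truncated subtraction). -/
def lk (t : 𝕋) (k : ℕ) : ℕ := cnt (tk t k) - 2

/-- The subterm `t/σ` of `t` at address `σ` (`false` = left/`0`, `true` = right/`1`). -/
def subT : 𝕋 → List Bool → Option 𝕋
  | t, [] => some t
  | FreeMagma.of _, _ :: _ => none
  | FreeMagma.mul a b, c :: σ => if c then subT b σ else subT a σ

/-- `σ <_lex ς` for incompatible binary sequences: at the first coordinate where
they differ, `σ` has `0` and `ς` has `1`. -/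
def lexLT (σ ς : List Bool) : Prop :=
  ∃ p σ' ς', σ = p ++ (false :: σ') ∧ ς = p ++ (true :: ς')

/-- `x₀·E`. -/
def x0E (E : Set 𝕋) : Set 𝕋 :=
  {x | ∃ a b c : 𝕋, x = a * (b * c) ∧ (a * b) * c ∈ E}

/-- `x₁·E`. -/
def x1E (E : Set 𝕋) : Set 𝕋 :=
  {x | ∃ s a b c : 𝕋, x = s * (a * (b * c)) ∧ s * ((a * b) * c) ∈ E}

/-- `u_σ` for a nonempty finite binary sequence `σ`. -/
def uSeq : List Bool → 𝕋
  | [] => e1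
  | [_] => e1
  | b :: σ => if b then e1 * uSeq σ else uSeq σ * e1

/-- `a ≪ b`: for some `p`, `#(a) < 2^p` and `2^p` divides `#(b)`. -/
def ll (a b : 𝕋) : Prop := ∃ p : ℕ, cnt a < 2 ^ p ∧ 2 ^ p ∣ cnt b

/-- `r↾n`: the first `n` values of `r` as a finite binary sequence. -/
def rList (r : ℕ → Bool) (n : ℕ) : List Bool := (List.range n).map r

/-- The map `h_r : 𝕋 → 𝕋`. -/
noncomputable def hr (r : ℕ → Bool) : 𝕋 → 𝕋
  | FreeMagma.of _ => uSeq (rList r 1)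
  | FreeMagma.mul a b =>
      if ll a b then hr r a * hr r b else uSeq (rList r (cnt a + cnt b))

/-- The action of `h_r` on measures: `h_r(μ)(f) = μ(f ∘ h_r)`. -/
noncomputable def hrM (r : ℕ → Bool) (φ : Bdd 𝕋 → ℝ) : Bdd 𝕋 → ℝ :=
  fun f => φ (liftBdd fun t => f.1 (hr r t))

/-- `lev`: `l(1) = 0`, `l(aˆb) = l(a) + 1`. -/
def lev : 𝕋 → ℕ
  | FreeMagma.of _ => 0
  | FreeMagma.mul a _ => lev a + 1

/-- `C` is closed under `ˆ`. -/
def HClosed (C : Set (Bdd 𝕋 → ℝ)) : Prop := ∀ μ ∈ C, ∀ ν ∈ C, hmul μ ν ∈ C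
/-!
Fix an address `σ`. The `μ ∈ C` giving measure one to all the sets of the claim form a
weak*-closed convex subset of `C`. It contains every product `μˆν` with `μ, ν ∈ C`: since
`(xˆy)/(c :: σ)` is `x/σ` or `y/σ`, the product gives such a set the measure that `μ` or `ν`
gives the corresponding set for `σ`, which is one by induction on `σ`. By minimality this subset
is all of `C`. For `σ = []` the set is the intersection of the measure-one sets `I` and
`{t : s ≺ t}`.
-/

section FinitelyAdditive

variable {S : Type*} {φ : Bdd S → ℝ}

lemma liftBdd_val {g : S → ℝ} (h : ∃ M, ∀ s, |g s| ≤ M) : (liftBdd g).1 = g := by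
  unfold liftBdd
  exact congrArg Subtype.val (dif_pos h)

lemma liftBdd_self (f : Bdd S) : liftBdd f.1 = f :=
  Subtype.ext (liftBdd_val f.2)

lemma indB_apply (E : Set S) (s : S) : (indB E).1 s = if s ∈ E then 1 else 0 := by
  rw [indB, liftBdd_val ⟨1, fun s => by split_ifs <;> simp⟩]

lemma apply_eq_of_forall_eq_const (hφ : φ ∈ PrSet S) {g : Bdd S} {c : ℝ}
    (hg : ∀ s, g.1 s = c) : φ g = c := by
  rw [hφ.2.1 c (constB S 1) g (fun s => by simp [constB, hg s]), hφ.2.2.2, mul_one]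

lemma mE_nonneg (hφ : φ ∈ PrSet S) (E : Set S) : 0 ≤ mE φ E :=
  hφ.2.2.1 _ fun s => by rw [indB_apply]; split_ifs <;> norm_num

lemma mE_univ (hφ : φ ∈ PrSet S) : mE φ Set.univ = 1 :=
  apply_eq_of_forall_eq_const hφ fun s => by simp [indB_apply]

lemma mE_union (hφ : φ ∈ PrSet S) {A B : Set S} (hAB : Disjoint A B) :
    mE φ (A ∪ B) = mE φ A + mE φ B := by
  refine hφ.1 _ _ _ fun s => ?_
  have := @Set.disjoint_left.mp hAB s
  by_cases hA : s ∈ A <;> by_cases hB : s ∈ B <;> simp_all [indB_apply]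

lemma mE_mono (hφ : φ ∈ PrSet S) {A B : Set S} (hAB : A ⊆ B) : mE φ A ≤ mE φ B := by
  rw [← Set.union_sdiff_cancel hAB, mE_union hφ Set.disjoint_sdiff_right]
  linarith [mE_nonneg hφ (B \ A)]

lemma mE_compl (hφ : φ ∈ PrSet S) (E : Set S) : mE φ Eᶜ = 1 - mE φ E := by
  rw [← mE_univ hφ, ← Set.union_compl_self E, mE_union hφ disjoint_compl_right]
  ring

lemma mE_inter_eq_one (hφ : φ ∈ PrSet S) {A B : Set S} (hA : mE φ A = 1)
    (hB : mE φ B = 1) : mE φ (A ∩ B) = 1 := by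
  have hdiff : mE φ (A \ B) ≤ 0 := by
    simpa [mE_compl hφ, hB] using mE_mono hφ (Set.sdiff_subset_compl A B)
  have hsplit : mE φ A = mE φ (A ∩ B) + mE φ (A \ B) := by
    rw [← mE_union hφ (Set.disjoint_sdiff_inter.symm), Set.inter_union_sdiff]
  have hle : mE φ (A ∩ B) ≤ 1 := mE_univ hφ ▸ mE_mono hφ (Set.subset_univ _)
  linarith

lemma isClosed_setOf_apply_eq (f : Bdd S) (c : ℝ) :
    IsClosed {φ : Bdd S → ℝ | φ f = c} :=
  isClosed_eq (continuous_apply f) continuous_const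

lemma convex_setOf_apply_eq (f : Bdd S) (c : ℝ) :
    Convex ℝ {φ : Bdd S → ℝ | φ f = c} :=
  (convex_singleton c).linear_preimage (LinearMap.proj (R := ℝ) (φ := fun _ => ℝ) f)

lemma starM_apply_of_left (op : S → S → S) (φ : Bdd S → ℝ) {ψ : Bdd S → ℝ}
    (hψ : ψ ∈ PrSet S) {f g : Bdd S} (h : ∀ x y, f.1 (op x y) = g.1 x) :
    starM op φ ψ f = φ g := by
  have hinner : (fun x => ψ (liftBdd fun y => f.1 (op x y))) = g.1 := by
    funext x
    exact apply_eq_of_forall_eq_const hψ fun y => by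
      rw [liftBdd_val ⟨|g.1 x|, fun y => (h x y).symm ▸ le_rfl⟩, h]
  simp only [starM, hinner, liftBdd_self]

lemma starM_apply_of_right (op : S → S → S) {φ : Bdd S → ℝ} (hφ : φ ∈ PrSet S)
    (ψ : Bdd S → ℝ) {f g : Bdd S} (h : ∀ x y, f.1 (op x y) = g.1 y) :
    starM op φ ψ f = ψ g := by
  have hinner : ∀ x, ψ (liftBdd fun y => f.1 (op x y)) = ψ g := fun x => by
    simp only [h, liftBdd_self]
  exact apply_eq_of_forall_eq_const hφ fun x => by
    rw [liftBdd_val ⟨|ψ g|, fun x => (hinner x).symm ▸ le_rfl⟩, hinner]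

end FinitelyAdditive

lemma subT_nil (t : 𝕋) : subT t [] = some t := by
  cases t <;> rfl

lemma subT_mul_cons (x y : 𝕋) (c : Bool) (σ : List Bool) :
    subT (x * y) (c :: σ) = subT (if c then y else x) σ := by
  cases c <;> rfl

lemma mE_hmul_subT_cons {φ ψ : Bdd 𝕋 → ℝ} (hφ : φ ∈ PrSet 𝕋) (hψ : ψ ∈ PrSet 𝕋)
    (c : Bool) (σ : List Bool) (P : 𝕋 → Prop) :
    mE (hmul φ ψ) {t | ∃ u, subT t (c :: σ) = some u ∧ P u} =
      mE (if c then ψ else φ) {t | ∃ u, subT t σ = some u ∧ P u} := by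
  cases c
  · exact starM_apply_of_left _ φ hψ fun x y => by simp [indB_apply, subT_mul_cons]
  · exact starM_apply_of_right _ hφ ψ fun x y => by simp [indB_apply, subT_mul_cons]

lemma subset_of_isMinimal {C D : Set (Bdd 𝕋 → ℝ)} (hne : C.Nonempty) (hcomp : IsCompact C)
    (hconv : Convex ℝ C) (hcl : HClosed C)
    (hmin : ∀ D ⊆ C, D.Nonempty → IsCompact D → Convex ℝ D → HClosed D → D = C)
    (hD : IsClosed D) (hDconv : Convex ℝ D) (hmulD : ∀ μ ∈ C, ∀ ν ∈ C, hmul μ ν ∈ D) :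
    C ⊆ D := by
  obtain ⟨μ, hμ⟩ := hne
  have hCD : C ∩ D = C :=
    hmin (C ∩ D) Set.inter_subset_left ⟨hmul μ μ, hcl μ hμ μ hμ, hmulD μ hμ μ hμ⟩
      (hcomp.inter_right hD) (hconv.inter hDconv)
      fun μ hμ ν hν => ⟨hcl μ hμ.1 ν hν.1, hmulD μ hμ.1 ν hν.1⟩
  exact hCD ▸ Set.inter_subset_right

theorem subterm_in_I_general (C : Set (Bdd 𝕋 → ℝ)) (hC : C ⊆ PrSet 𝕋)
    (hne : C.Nonempty) (hcomp : IsCompact C) (hconv : Convex ℝ C) (hcl : HClosed C)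
    (hmin : ∀ D ⊆ C, D.Nonempty → IsCompact D → Convex ℝ D → HClosed D → D = C)
    (r : 𝕋 → 𝕋 → Prop)
    (I : Set 𝕋)
    (hIdef : I = {s : 𝕋 | ∀ μ ∈ C, mE μ {t : 𝕋 | r s t ∧ ¬ r t s} = 1})
    (hI1 : ∀ μ ∈ C, mE μ I = 1) :
    ∀ μ ∈ C, ∀ s ∈ I, ∀ σ : List Bool,
      mE μ {t : 𝕋 | ∃ u, subT t σ = some u ∧ u ∈ I ∧ (r s u ∧ ¬ r u s)} = 1 := by
  intro μ hμ s hs σ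
  induction σ generalizing μ s with
  | nil =>
    have hset : {t : 𝕋 | ∃ u, subT t [] = some u ∧ u ∈ I ∧ (r s u ∧ ¬ r u s)} =
        I ∩ {t | r s t ∧ ¬ r t s} := by
      ext t
      simp only [subT_nil, Option.some.injEq, exists_eq_left', Set.mem_ofPred_eq,
        Set.mem_inter_iff]
    rw [hset]
    exact mE_inter_eq_one (hC hμ) (hI1 μ hμ) ((hIdef ▸ hs) μ hμ)
  | cons c σ ih =>
    suffices hsub : C ⊆ ⋂ s ∈ I,
        {φ | mE φ {t | ∃ u, subT t (c :: σ) = some u ∧ u ∈ I ∧ (r s u ∧ ¬ r u s)} = 1} by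
      exact Set.mem_iInter₂.mp (hsub hμ) s hs
    refine subset_of_isMinimal hne hcomp hconv hcl hmin
      (isClosed_biInter fun s _ => isClosed_setOf_apply_eq _ 1)
      (convex_iInter₂ fun s _ => convex_setOf_apply_eq _ 1) fun μ hμ ν hν => ?_
    refine Set.mem_iInter₂.mpr fun s hs => ?_
    rw [Set.mem_ofPred_eq, mE_hmul_subT_cons (hC hμ) (hC hν)]
    cases c
    exacts [ih μ hμ s hs, ih ν hν s hs]

/-- Claim 5.6: with `C` minimal and
`I = {s : ∀ μ ∈ C, μ({t : s ≺ t}) = 1}`, if `μ(I) = 1` for all `μ ∈ C`, then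
for every `μ ∈ C`, `s ∈ I`, and binary sequence `σ`,
`μ({t : t/σ is defined, t/σ ∈ I, s ≺ t/σ}) = 1`. -/
theorem subterm_in_I (C : Set (Bdd 𝕋 → ℝ)) (hC : C ⊆ PrSet 𝕋)
    (hne : C.Nonempty) (hcomp : IsCompact C) (hconv : Convex ℝ C) (hcl : HClosed C)
    (hmin : ∀ D ⊆ C, D.Nonempty → IsCompact D → Convex ℝ D → HClosed D → D = C)
    (r : 𝕋 → 𝕋 → Prop)
    (hrefl : ∀ s, r s s)
    (htrans : ∀ a b c, r a b → r b c → r a c)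
    (htotal : ∀ s t, r s t ∨ r t s)
    (hop : ∀ s t : 𝕋, (r s (s * t) ∧ ¬ r (s * t) s) ∧ (r t (s * t) ∧ ¬ r (s * t) t))
    (I : Set 𝕋)
    (hIdef : I = {s : 𝕋 | ∀ μ ∈ C, mE μ {t : 𝕋 | r s t ∧ ¬ r t s} = 1})
    (hI1 : ∀ μ ∈ C, mE μ I = 1) :
    ∀ μ ∈ C, ∀ s ∈ I, ∀ σ : List Bool,
      mE μ {t : 𝕋 | ∃ u, subT t σ = some u ∧ u ∈ I ∧ (r s u ∧ ¬ r u s)} = 1 :=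
  subterm_in_I_general C hC hne hcomp hconv hcl hmin r I hIdef hI1
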